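/- arXiv:2010.10090 — 2 statements merged into one kernel-verified Lean document; each statement's English description precedes it below -/
import Mathlib

section
/- (Transfer risk bound) Let P be a probability distribution on an input space 𝒳, φ : 𝒳 → ℝᵖ a feature map, and u, v ∈ ℝᵖ nonzero vectors (u = Δw* − Δw_z the oracle direction, v = Δŵ − Δw_z the student direction). Let ᾱ(a,b) ∈ [0, π/2] denote the acute angle arccos(|⟨a,b⟩|/(‖a‖‖b‖)), let ᾱₙ = ᾱ(u, v), and assume the (non-acute) angle α(u,v) ≤ π/2. Define p(β) = P[ᾱ(φ(x), u) > β]. Then the transfer risk ℛ = P[(uᵀφ(x))·(vᵀφ(x)) < 0] satisfies ℛ ≤ p(π/2 − ᾱₙ). -/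
open scoped RealInnerProductSpace
open MeasureTheory

/-- The acute angle `ᾱ(a,b) = arccos(|⟪a,b⟫|/(‖a‖‖b‖)) ∈ [0, π/2]`. -/
noncomputable def acuteAngle {E : Type*} [NormedAddCommGroup E]
    [InnerProductSpace ℝ E] (a b : E) : ℝ :=
  Real.arccos (|⟪a, b⟫| / (‖a‖ * ‖b‖))

/-!
Flipping the sign of `φ x` changes neither the sign of `⟪u, φ x⟫ * ⟪v, φ x⟫` nor `ᾱ(φ x, u)`, so we
may assume `⟪φ x, u⟫ ≥ 0`; then `ᾱ(φ x, u)` and `ᾱ(u, v)` are genuine angles, and the triangle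
inequality for angles gives `α(φ x, v) ≤ ᾱ(φ x, u) + ᾱ(u, v) ≤ π/2`, so `⟪φ x, v⟫ ≥ 0` as well.
-/

namespace InnerProductGeometry

variable {E : Type*} [NormedAddCommGroup E] [InnerProductSpace ℝ E]

theorem angle_le_pi_div_two_iff_inner_nonneg {x y : E} : angle x y ≤ Real.pi / 2 ↔ 0 ≤ ⟪x, y⟫ := by
  rw [angle, Real.arccos_le_pi_div_two]
  rcases eq_or_ne x 0 with rfl | hx
  · simp
  rcases eq_or_ne y 0 with rfl | hy
  · simp
  rw [le_div_iff₀ (by positivity), zero_mul]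

end InnerProductGeometry

open InnerProductGeometry

section AcuteAngle

variable {E : Type*} [NormedAddCommGroup E] [InnerProductSpace ℝ E]

@[simp]
theorem acuteAngle_neg_left (a b : E) : acuteAngle (-a) b = acuteAngle a b := by
  simp [acuteAngle]

theorem acuteAngle_eq_angle_of_inner_nonneg {a b : E} (h : 0 ≤ ⟪a, b⟫) :
    acuteAngle a b = angle a b := by
  rw [acuteAngle, angle, abs_of_nonneg h]

theorem inner_mul_inner_nonneg_of_acuteAngle_le {u v w : E} (huv : 0 ≤ ⟪u, v⟫)
    (h : acuteAngle w u ≤ Real.pi / 2 - acuteAngle u v) : 0 ≤ ⟪u, w⟫ * ⟪v, w⟫ := by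
  wlog hwu : 0 ≤ ⟪w, u⟫ generalizing w
  · have := this (w := -w) (by rwa [acuteAngle_neg_left]) (by rw [inner_neg_left]; linarith)
    simpa [inner_neg_right] using this
  have hwv : angle w v ≤ Real.pi / 2 := calc
    angle w v ≤ angle w u + angle u v := angle_le_angle_add_angle w u v
    _ ≤ Real.pi / 2 := by
      rw [← acuteAngle_eq_angle_of_inner_nonneg hwu, ← acuteAngle_eq_angle_of_inner_nonneg huv]
      linarith
  rw [real_inner_comm w u, real_inner_comm w v]
  exact mul_nonneg hwu (angle_le_pi_div_two_iff_inner_nonneg.1 hwv)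

end AcuteAngle

theorem transfer_risk_bound_general
    {𝒳 : Type*} [MeasurableSpace 𝒳] (μ : Measure 𝒳)
    (p : ℕ) (φ : 𝒳 → EuclideanSpace ℝ (Fin p))
    (u v : EuclideanSpace ℝ (Fin p))
    (hangle : InnerProductGeometry.angle u v ≤ Real.pi / 2) :
    μ {x | ⟪u, φ x⟫ * ⟪v, φ x⟫ < 0}
      ≤ μ {x | Real.pi / 2 - acuteAngle u v < acuteAngle (φ x) u} := by
  have huv : 0 ≤ ⟪u, v⟫ := angle_le_pi_div_two_iff_inner_nonneg.1 hangle
  refine measure_mono fun x hx => ?_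
  simp only [Set.mem_ofPred_eq] at hx ⊢
  by_contra! hx'
  exact hx.not_ge (inner_mul_inner_nonneg_of_acuteAngle_le huv hx')

/-- Transfer risk bound: if `α(u,v) ≤ π/2`, the transfer risk
`ℛ = P[(uᵀφ(x))(vᵀφ(x)) < 0]` is bounded by `p(π/2 − ᾱₙ)` where
`p(β) = P[ᾱ(φ(x), u) > β]` and `ᾱₙ = ᾱ(u,v)`. -/
theorem transfer_risk_bound
    {𝒳 : Type*} [MeasurableSpace 𝒳] (μ : Measure 𝒳) [IsProbabilityMeasure μ]
    (p : ℕ) (φ : 𝒳 → EuclideanSpace ℝ (Fin p))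
    (u v : EuclideanSpace ℝ (Fin p)) (hu : u ≠ 0) (hv : v ≠ 0)
    (hangle : InnerProductGeometry.angle u v ≤ Real.pi / 2) :
    μ {x | ⟪u, φ x⟫ * ⟪v, φ x⟫ < 0}
      ≤ μ {x | Real.pi / 2 - acuteAngle u v < acuteAngle (φ x) u} :=
  transfer_risk_bound_general μ p φ u v hangle
end

section
/- (Kernel form of the angle derivative) Let Φ ∈ ℝ^{p×n} have full column rank, Θ = ΦᵀΦ, and write ⟨a, b⟩_Θ = aᵀ Θ⁻¹ b for a, b ∈ ℝⁿ. Given vectors z_g, z_t, δz_h ∈ ℝⁿ with z_t ≠ 0, set g = ΦΘ⁻¹z_g, t = ΦΘ⁻¹z_t, h = ΦΘ⁻¹δz_h. Then ⟨g, t⟩ = ⟨z_g, z_t⟩_Θ, ‖t‖² = ⟨z_t, z_t⟩_Θ, and the derivative at ε = 0 of cos α(t + εh, g·(‖w_g‖/‖g‖)) with respect to ε, when g is replaced by the full oracle weight w_g with Φᵀw_g = z_g, equals (1/(‖w_g‖₂ √(⟨z_t,z_t⟩_Θ))) · ( ⟨z_g, δz_h⟩_Θ − (⟨z_g, z_t⟩_Θ/⟨z_t,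 z_t⟩_Θ)·⟨z_t, δz_h⟩_Θ ). -/
/-!
Since `Φᵀ` is the adjoint of `Φ` and `Φᵀ Φ Θ⁻¹ = 1`, a vector `w` with `Φᵀ w = z` satisfies
`⟪w, Φ Θ⁻¹ y⟫ = ⟪z, Θ⁻¹ y⟫`; applied to `w = g, t, w_g` this turns every Euclidean inner
product in the statement into a `Θ⁻¹`-inner product. The derivative itself is the quotient rule
for `ε ↦ ⟪w, t + ε h⟫ / (‖w‖ ‖t + ε h‖)`, which is differentiable at `0` as soon as `t ≠ 0`;
and `t ≠ 0` because `Φᵀ t = z_t ≠ 0`.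
-/

open Matrix

section Angle

variable {ι : Type*} [Fintype ι]

noncomputable def cosAngle (w v : ι → ℝ) : ℝ :=
  (w ⬝ᵥ v) / (√(w ⬝ᵥ w) * √(v ⬝ᵥ v))

theorem hasDerivAt_dotProduct_add_smul (w t h : ι → ℝ) (ε₀ : ℝ) :
    HasDerivAt (fun ε : ℝ => w ⬝ᵥ (t + ε • h)) (w ⬝ᵥ h) ε₀ := by
  simp only [dotProduct_add, dotProduct_smul, smul_eq_mul]
  simpa using ((hasDerivAt_id ε₀).mul_const (w ⬝ᵥ h)).const_add (w ⬝ᵥ t)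

theorem hasDerivAt_dotProduct_self_add_smul (t h : ι → ℝ) :
    HasDerivAt (fun ε : ℝ => (t + ε • h) ⬝ᵥ (t + ε • h)) (2 * (t ⬝ᵥ h)) 0 := by
  have hexpand : (fun ε : ℝ => (t + ε • h) ⬝ᵥ (t + ε • h)) =
      fun ε => t ⬝ᵥ t + ε * (2 * (t ⬝ᵥ h)) + ε ^ 2 * (h ⬝ᵥ h) := by
    ext ε
    simp only [dotProduct_add, add_dotProduct, dotProduct_smul, smul_dotProduct, smul_eq_mul,
      dotProduct_comm h t]
    ring
  rw [hexpand]
  have hpoly := (((hasDerivAt_id (0 : ℝ)).mul_const (2 * (t ⬝ᵥ h))).const_add (t ⬝ᵥ t)).add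
    ((hasDerivAt_pow 2 (0 : ℝ)).mul_const (h ⬝ᵥ h))
  norm_num at hpoly
  exact hpoly

theorem hasDerivAt_cosAngle_add_smul (w h : ι → ℝ) {t : ι → ℝ} (ht : t ≠ 0) :
    HasDerivAt (fun ε : ℝ => cosAngle w (t + ε • h))
      ((w ⬝ᵥ h - (w ⬝ᵥ t) / (t ⬝ᵥ t) * (t ⬝ᵥ h)) / (√(w ⬝ᵥ w) * √(t ⬝ᵥ t))) 0 := by
  have htt : 0 < t ⬝ᵥ t := by simpa using dotProduct_self_star_pos_iff.mpr ht
  have hsqrt : 0 < √(t ⬝ᵥ t) := Real.sqrt_pos.mpr htt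
  unfold cosAngle
  simp_rw [div_mul_eq_div_div_swap]
  refine HasDerivAt.div_const ?_ _
  have hnorm := (hasDerivAt_dotProduct_self_add_smul t h).sqrt (by simpa using htt.ne')
  convert (hasDerivAt_dotProduct_add_smul w t h 0).fun_div hnorm (by simpa using hsqrt.ne') using 1
  simp only [zero_smul, add_zero]
  field_simp
  rw [Real.sq_sqrt htt.le]
  ring

end Angle

theorem Matrix.transpose_mulVec_mulVec_inv_mulVec {R m n : Type*} [CommRing R] [Fintype m]
    [Fintype n] [DecidableEq n] (Φ : Matrix m n R) [Invertible (Φᵀ * Φ)] (x : n → R) :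
    Φᵀ *ᵥ (Φ *ᵥ ((Φᵀ * Φ)⁻¹ *ᵥ x)) = x := by
  rw [mulVec_mulVec, mulVec_mulVec, mul_inv_of_invertible, one_mulVec]

theorem kernel_form_angle_derivative_general
    (p n : ℕ) (Φ : Matrix (Fin p) (Fin n) ℝ)
    (Θ : Matrix (Fin n) (Fin n) ℝ) (hΘ : Θ = Φᵀ * Φ)
    [Invertible Θ]
    (zg zt δzh : Fin n → ℝ) (hzt : zt ≠ 0)
    (g t h : Fin p → ℝ)
    (hg : g = Φ.mulVec (Θ⁻¹.mulVec zg))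
    (ht : t = Φ.mulVec (Θ⁻¹.mulVec zt))
    (hh : h = Φ.mulVec (Θ⁻¹.mulVec δzh))
    (wg : Fin p → ℝ) (hwg : Φᵀ.mulVec wg = zg) :
    g ⬝ᵥ t = zg ⬝ᵥ Θ⁻¹.mulVec zt ∧
    t ⬝ᵥ t = zt ⬝ᵥ Θ⁻¹.mulVec zt ∧
    HasDerivAt
      (fun ε : ℝ => (wg ⬝ᵥ (t + ε • h)) /
        (Real.sqrt (wg ⬝ᵥ wg) * Real.sqrt ((t + ε • h) ⬝ᵥ (t + ε • h))))
      ((zg ⬝ᵥ Θ⁻¹.mulVec δzh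
          - (zg ⬝ᵥ Θ⁻¹.mulVec zt) / (zt ⬝ᵥ Θ⁻¹.mulVec zt)
            * (zt ⬝ᵥ Θ⁻¹.mulVec δzh))
        / (Real.sqrt (wg ⬝ᵥ wg) * Real.sqrt (zt ⬝ᵥ Θ⁻¹.mulVec zt))) 0 := by
  subst hΘ hg ht hh
  have hpair : ∀ {w : Fin p → ℝ} {z : Fin n → ℝ}, Φᵀ *ᵥ w = z →
      ∀ y, w ⬝ᵥ Φ *ᵥ ((Φᵀ * Φ)⁻¹ *ᵥ y) = z ⬝ᵥ (Φᵀ * Φ)⁻¹ *ᵥ y := by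
    rintro w z rfl y
    rw [← dotProduct_transpose_mulVec, dotProduct_comm]
  have htz := transpose_mulVec_mulVec_inv_mulVec Φ zt
  have ht0 : Φ *ᵥ ((Φᵀ * Φ)⁻¹ *ᵥ zt) ≠ 0 := by
    intro ht0
    rw [ht0, mulVec_zero] at htz
    exact hzt htz.symm
  refine ⟨hpair (transpose_mulVec_mulVec_inv_mulVec Φ zg) zt, hpair htz zt, ?_⟩
  refine (hasDerivAt_cosAngle_add_smul wg (Φ *ᵥ ((Φᵀ * Φ)⁻¹ *ᵥ δzh)) ht0).congr_deriv ?_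
  rw [hpair hwg, hpair hwg, hpair htz, hpair htz]

/-- Kernel form of the angle derivative: with `Θ = ΦᵀΦ`
positive definite, `⟨a,b⟩_Θ = aᵀΘ⁻¹b`, `g = ΦΘ⁻¹z_g`, `t = ΦΘ⁻¹z_t`,
`h = ΦΘ⁻¹δz_h`, and `w_g` with `Φᵀw_g = z_g`: one has `⟪g,t⟫ = ⟨z_g,z_t⟩_Θ`,
`‖t‖² = ⟨z_t,z_t⟩_Θ`, and the derivative at `ε = 0` of
`ε ↦ cos α(t + εh, w_g)` equals
`(⟨z_g,δz_h⟩_Θ − (⟨z_g,z_t⟩_Θ/⟨z_t,z_t⟩_Θ)⟨z_t,δz_h⟩_Θ)/(‖w_g‖₂ √⟨z_t,z_t⟩_Θ)`. -/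
theorem kernel_form_angle_derivative
    (p n : ℕ) (Φ : Matrix (Fin p) (Fin n) ℝ)
    (Θ : Matrix (Fin n) (Fin n) ℝ) (hΘ : Θ = Φᵀ * Φ)
    (hΘpd : Θ.PosDef) [Invertible Θ]
    (zg zt δzh : Fin n → ℝ) (hzt : zt ≠ 0)
    (g t h : Fin p → ℝ)
    (hg : g = Φ.mulVec (Θ⁻¹.mulVec zg))
    (ht : t = Φ.mulVec (Θ⁻¹.mulVec zt))
    (hh : h = Φ.mulVec (Θ⁻¹.mulVec δzh))
    (wg : Fin p → ℝ) (hwg : Φᵀ.mulVec wg = zg) (hwg0 : wg ≠ 0) :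
    g ⬝ᵥ t = zg ⬝ᵥ Θ⁻¹.mulVec zt ∧
    t ⬝ᵥ t = zt ⬝ᵥ Θ⁻¹.mulVec zt ∧
    HasDerivAt
      (fun ε : ℝ => (wg ⬝ᵥ (t + ε • h)) /
        (Real.sqrt (wg ⬝ᵥ wg) * Real.sqrt ((t + ε • h) ⬝ᵥ (t + ε • h))))
      ((zg ⬝ᵥ Θ⁻¹.mulVec δzh
          - (zg ⬝ᵥ Θ⁻¹.mulVec zt) / (zt ⬝ᵥ Θ⁻¹.mulVec zt)
            * (zt ⬝ᵥ Θ⁻¹.mulVec δzh))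
        / (Real.sqrt (wg ⬝ᵥ wg) * Real.sqrt (zt ⬝ᵥ Θ⁻¹.mulVec zt))) 0 :=
  kernel_form_angle_derivative_general p n Φ Θ hΘ zg zt δzh hzt g t h hg ht hh wg hwg
end
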